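/- Let M be a Γ-semiring, B a generalized bi-Γ-ideal of M, and A a nonempty subset of M. Then BΓA is a generalized bi-Γ-ideal of M. -/

import Mathlib

/-- A Γ-semiring: additive commutative semigroups `M` and `G` with a triple
product `M → G → M → M` satisfying distributivity and associativity laws. -/
structure GammaSemiring (M G : Type*) [AddCommSemigroup M] [AddCommSemigroup G] where
  tmul : M → G → M → M
  left_distrib : ∀ a γ b c, tmul a γ (b + c) = tmul a γ b + tmul a γ c
  right_distrib : ∀ a b γ c, tmul (a + b) γ c = tmul a γ c + tmul b γ c
  gamma_distrib : ∀ a γ δ b, tmul a (γ + δ) b = tmul a γ b + tmul a δ b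
  mul_assoc : ∀ a γ b δ c, tmul (tmul a γ b) δ c = tmul a γ (tmul b δ c)

namespace GammaSemiring

variable {M G : Type*} [AddCommSemigroup M] [AddCommSemigroup G]

/-- `AΓB`: the set of all finite (nonempty) sums `Σᵢ aᵢγᵢbᵢ` with `aᵢ ∈ A`,
`γᵢ ∈ Γ`, `bᵢ ∈ B`, realized as the additive subsemigroup closure of the set
of single products. -/
def sprod (gs : GammaSemiring M G) (A B : Set M) : Set M :=
  (AddSubsemigroup.closure {x | ∃ a ∈ A, ∃ γ : G, ∃ b ∈ B, x = gs.tmul a γ b} :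
    AddSubsemigroup M)

/-- A generalized bi-Γ-ideal of `M`: a nonempty subset `A` with `AΓMΓA ⊆ A`. -/
def IsGenBiIdeal (gs : GammaSemiring M G) (A : Set M) : Prop :=
  A.Nonempty ∧ gs.sprod (gs.sprod A Set.univ) A ⊆ A

/-- A sub-Γ-semiring: nonempty, closed under addition and the Γ-product. -/
def IsSubGammaSemiring (gs : GammaSemiring M G) (T : Set M) : Prop :=
  T.Nonempty ∧ (∀ a ∈ T, ∀ b ∈ T, a + b ∈ T) ∧
    ∀ a ∈ T, ∀ γ : G, ∀ b ∈ T, gs.tmul a γ b ∈ T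

/-- A generalized bi-Γ-ideal of the Γ-semiring `T` (a subset of `M`):
a nonempty subset `A ⊆ T` with `AΓTΓA ⊆ A`. -/
def IsGenBiIdealIn (gs : GammaSemiring M G) (T A : Set M) : Prop :=
  A.Nonempty ∧ A ⊆ T ∧ gs.sprod (gs.sprod A T) A ⊆ A

/-- A Γ-ideal of `M`. -/
def IsGammaIdeal (gs : GammaSemiring M G) (A : Set M) : Prop :=
  A.Nonempty ∧ (∀ a ∈ A, ∀ b ∈ A, a + b ∈ A) ∧
    ∀ a ∈ A, ∀ γ : G, ∀ x : M, gs.tmul x γ a ∈ A ∧ gs.tmul a γ x ∈ A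

/-- A quasi-Γ-ideal of `M`: a sub-Γ-semiring `A` with `AΓM ∩ MΓA ⊆ A`. -/
def IsQuasiGammaIdeal (gs : GammaSemiring M G) (A : Set M) : Prop :=
  gs.IsSubGammaSemiring A ∧ gs.sprod A Set.univ ∩ gs.sprod Set.univ A ⊆ A

/-- A bi-Γ-ideal of `M`: a sub-Γ-semiring `A` with `AΓMΓA ⊆ A`. -/
def IsBiIdeal (gs : GammaSemiring M G) (A : Set M) : Prop :=
  gs.IsSubGammaSemiring A ∧ gs.sprod (gs.sprod A Set.univ) A ⊆ A

/-- `M` is GB-simple: `M` is its unique generalized bi-Γ-ideal. -/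
def GBSimple (gs : GammaSemiring M G) : Prop :=
  ∀ A : Set M, gs.IsGenBiIdeal A → A = Set.univ

/-- The sub-Γ-semiring `T`, regarded as a Γ-semiring, is GB-simple. -/
def GBSimpleIn (gs : GammaSemiring M G) (T : Set M) : Prop :=
  ∀ A : Set M, gs.IsGenBiIdealIn T A → A = T

end GammaSemiring

open GammaSemiring

variable {M G : Type*} [AddCommSemigroup M] [AddCommSemigroup G]

/-! Since `Γ`-products of subsets are associative, `(BΓA)ΓMΓ(BΓA) = (((BΓA)ΓM)ΓB)ΓA`, and
`(BΓA)ΓM = BΓ(AΓM) ⊆ BΓM`; hence it lies in `(BΓMΓB)ΓA ⊆ BΓA`. -/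

namespace GammaSemiring

variable (gs : GammaSemiring M G) {A B C : Set M}

theorem tmul_mem_sprod {a b : M} (ha : a ∈ A) (γ : G) (hb : b ∈ B) :
    gs.tmul a γ b ∈ gs.sprod A B :=
  AddSubsemigroup.subset_closure ⟨a, ha, γ, b, hb, rfl⟩

theorem add_mem_sprod {x y : M} (hx : x ∈ gs.sprod A B) (hy : y ∈ gs.sprod A B) :
    x + y ∈ gs.sprod A B :=
  AddSubsemigroup.add_mem _ hx hy

theorem sprod_induction {p : M → Prop} {x : M} (hx : x ∈ gs.sprod A B)
    (tmul : ∀ a ∈ A, ∀ γ : G, ∀ b ∈ B, p (gs.tmul a γ b))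
    (add : ∀ x y, p x → p y → p (x + y)) : p x := by
  refine AddSubsemigroup.closure_induction ?_ (fun x y _ _ => add x y) hx
  rintro _ ⟨a, ha, γ, b, hb, rfl⟩
  exact tmul a ha γ b hb

theorem sprod_nonempty [Nonempty G] (hA : A.Nonempty) (hB : B.Nonempty) :
    (gs.sprod A B).Nonempty :=
  let ⟨_, ha⟩ := hA
  let ⟨_, hb⟩ := hB
  ⟨_, gs.tmul_mem_sprod ha (Classical.arbitrary G) hb⟩

theorem sprod_mono {A' B' : Set M} (hA : A ⊆ A') (hB : B ⊆ B') :
    gs.sprod A B ⊆ gs.sprod A' B' := fun _ hx =>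
  gs.sprod_induction hx (fun _ ha γ _ hb => gs.tmul_mem_sprod (hA ha) γ (hB hb))
    (fun _ _ => gs.add_mem_sprod)

theorem tmul_mem_sprod_sprod_of_left {u c : M} (hu : u ∈ gs.sprod A B) (δ : G) (hc : c ∈ C) :
    gs.tmul u δ c ∈ gs.sprod A (gs.sprod B C) := by
  refine gs.sprod_induction (p := fun u => gs.tmul u δ c ∈ _) hu ?_ ?_
  · intro a ha γ b hb
    rw [gs.mul_assoc]
    exact gs.tmul_mem_sprod ha γ (gs.tmul_mem_sprod hb δ hc)
  · intro x y hx hy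
    rw [gs.right_distrib]
    exact gs.add_mem_sprod hx hy

theorem tmul_mem_sprod_sprod_of_right {a w : M} (ha : a ∈ A) (γ : G) (hw : w ∈ gs.sprod B C) :
    gs.tmul a γ w ∈ gs.sprod (gs.sprod A B) C := by
  refine gs.sprod_induction (p := fun w => gs.tmul a γ w ∈ _) hw ?_ ?_
  · intro b hb δ c hc
    rw [← gs.mul_assoc]
    exact gs.tmul_mem_sprod (gs.tmul_mem_sprod ha γ hb) δ hc
  · intro x y hx hy
    rw [gs.left_distrib]
    exact gs.add_mem_sprod hx hy

theorem sprod_assoc (A B C : Set M) :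
    gs.sprod (gs.sprod A B) C = gs.sprod A (gs.sprod B C) := by
  apply Set.Subset.antisymm <;> intro x hx <;>
    refine gs.sprod_induction hx ?_ (fun _ _ => gs.add_mem_sprod)
  · exact fun u hu δ c hc => gs.tmul_mem_sprod_sprod_of_left hu δ hc
  · exact fun a ha γ w hw => gs.tmul_mem_sprod_sprod_of_right ha γ hw

theorem sprod_sprod_univ_subset (A B : Set M) :
    gs.sprod (gs.sprod A B) Set.univ ⊆ gs.sprod A Set.univ := by
  rw [sprod_assoc]
  exact gs.sprod_mono subset_rfl (Set.subset_univ _)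

end GammaSemiring

theorem stmt13 [Nonempty G] (gs : GammaSemiring M G) (B : Set M)
    (hB : gs.IsGenBiIdeal B) (A : Set M) (hA : A.Nonempty) :
    gs.IsGenBiIdeal (gs.sprod B A) := by
  refine ⟨gs.sprod_nonempty hB.1 hA, ?_⟩
  calc gs.sprod (gs.sprod (gs.sprod B A) Set.univ) (gs.sprod B A)
      = gs.sprod (gs.sprod (gs.sprod (gs.sprod B A) Set.univ) B) A := by
        rw [gs.sprod_assoc _ B A]
    _ ⊆ gs.sprod (gs.sprod (gs.sprod B Set.univ) B) A :=
        gs.sprod_mono (gs.sprod_mono (gs.sprod_sprod_univ_subset B A) subset_rfl) subset_rfl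
    _ ⊆ gs.sprod B A := gs.sprod_mono hB.2 subset_rfl
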